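/- arXiv:math/0611083 — 2 statements merged into one kernel-verified Lean document; each statement's English description precedes it below -/
import Mathlib

section
/- The solution of the second-order cell problem satisfies −1 ≤ γ(y) ≤ 0 for every y with f(y₁) ≤ y₂; in particular its interface average satisfies γ̄ ∈ [−1,0]. -/
open MeasureTheory Real Set

noncomputable section

/-- Partial derivative in the first variable. -/
def pd1 (u : ℝ → ℝ → ℝ) (x y : ℝ) : ℝ := deriv (fun t => u t y) x

/-- Partial derivative in the second variable. -/
def pd2 (u : ℝ → ℝ → ℝ) (x y : ℝ) : ℝ := deriv (fun t => u x t) y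

/-- Laplacian. -/
def lap (u : ℝ → ℝ → ℝ) (x y : ℝ) : ℝ := pd1 (pd1 u) x y + pd2 (pd2 u) x y

/-- Squared modulus of the gradient. -/
def gradSq (u : ℝ → ℝ → ℝ) (x y : ℝ) : ℝ := (pd1 u x y) ^ 2 + (pd2 u x y) ^ 2

/-- The rough domain Ω^ε. -/
def OmegaEps (f : ℝ → ℝ) (L ε : ℝ) : Set (ℝ × ℝ) :=
  {p | 0 < p.1 ∧ p.1 < L ∧ ε * f (p.1 / ε) < p.2 ∧ p.2 < 1}

/-- The smooth domain Ω⁰. -/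
def Omega0 (L : ℝ) : Set (ℝ × ℝ) := Ioo 0 L ×ˢ Ioo (0 : ℝ) 1

/-- The periodic rough strip. -/
def RoughStrip (f : ℝ → ℝ) (ε : ℝ) : Set (ℝ × ℝ) :=
  {p | ε * f (p.1 / ε) < p.2 ∧ p.2 < 1}

/-- A classical solution of the rough problem `-Δu = C` in `Ω^ε`, `u = 0` on `Γ^ε ∪ Γ¹`,
periodic in `x₁`, with finite Dirichlet energy. -/
structure RoughSolution (f : ℝ → ℝ) (L C ε : ℝ) (u : ℝ → ℝ → ℝ) : Prop where
  cont : ContinuousOn (fun p : ℝ × ℝ => u p.1 p.2) (closure (OmegaEps f L ε))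
  periodic : ∀ x y, u (x + L) y = u x y
  smooth : ContDiffOn ℝ 2 (fun p : ℝ × ℝ => u p.1 p.2) (RoughStrip f ε)
  eqn : ∀ p ∈ OmegaEps f L ε, -(lap u p.1 p.2) = C
  bc_rough : ∀ x, u x (ε * f (x / ε)) = 0
  bc_top : ∀ x, u x 1 = 0
  energy : IntegrableOn (fun p : ℝ × ℝ => gradSq u p.1 p.2) (OmegaEps f L ε)

/-- The zeroth order approximation `u^{0,1}`: Poiseuille profile, linearly extended below. -/
def u01 (C : ℝ) (x y : ℝ) : ℝ := if 0 ≤ y then C / 2 * (1 - y) * y else C / 2 * y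

/-- A classical solution of a cell problem: harmonic above the rough boundary
`{y₂ = f(y₁)}`, `2π`-periodic in `y₁`, with boundary value `g` on the rough boundary and
finite Dirichlet energy over one period. -/
structure CellSolution (f : ℝ → ℝ) (g : ℝ → ℝ) (β : ℝ → ℝ → ℝ) : Prop where
  cont : ContinuousOn (fun p : ℝ × ℝ => β p.1 p.2) {p : ℝ × ℝ | f p.1 ≤ p.2}
  periodic : ∀ y₁ y₂, β (y₁ + 2 * π) y₂ = β y₁ y₂
  smooth : ContDiffOn ℝ 2 (fun p : ℝ × ℝ => β p.1 p.2) {p : ℝ × ℝ | f p.1 < p.2}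
  harmonic : ∀ p : ℝ × ℝ, f p.1 < p.2 → lap β p.1 p.2 = 0
  bc : ∀ t, β t (f t) = g t
  energy : IntegrableOn (fun p : ℝ × ℝ => gradSq β p.1 p.2)
    {p : ℝ × ℝ | 0 < p.1 ∧ p.1 < 2 * π ∧ f p.1 < p.2}

/-- The average on the fictitious interface `Γ = {y₂ = 0}`. -/
def interfaceAvg (β : ℝ → ℝ → ℝ) : ℝ := (1 / (2 * π)) * ∫ t in (0 : ℝ)..(2 * π), β t 0

/-!
A weak maximum principle for periodic harmonic functions of finite energy above a graph.
On a truncated slab `f y₁ ≤ y₂ ≤ M` the classical argument (add the strictly subharmonic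
perturbation `κ y₂²` and apply the second derivative test at an interior maximum) bounds `u`
by its values on the bottom and on the top line. Periodicity and harmonicity make the flux
`∫ ∂₂u(t, s) dt` independent of `s`, and finite Dirichlet energy forces it to vanish; so the
horizontal average `a` of `u` is the same on every line above the boundary, and on suitable
high lines the tangential derivative is so small that `u` is uniformly close to `a`. Hence
`u ≤ max c a` whenever `u ≤ c` on the boundary. If `a > c`, then `u ≤ a` with average `a` on
every horizontal line above the boundary, so `u = a` there, and letting the line descend to
the highest boundary point gives `a ≤ c`. Applied to `γ` with `c = 0` and to `-γ` with
`c = 1`, this gives `-1 ≤ γ ≤ 0`.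
-/

open Filter Topology

theorem IsLocalMax.deriv_deriv_nonpos {g : ℝ → ℝ} {x : ℝ} (h : IsLocalMax g x)
    (hc : ContinuousAt g x) : deriv (deriv g) x ≤ 0 := by
  by_contra! hpos
  -- by the second derivative test `x` is also a local minimum, so `g` is locally constant
  have hmin := isLocalMin_of_deriv_deriv_pos hpos h.deriv_eq_zero hc
  have hconst : g =ᶠ[𝓝 x] fun _ => g x := (hmin.and h).mono fun y hy => le_antisymm hy.2 hy.1
  have := hconst.deriv.deriv_eq
  simp only [deriv_const'] at this
  exact hpos.ne' this

section PartialDerivatives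

variable {F : ℝ → ℝ → ℝ} {U : Set (ℝ × ℝ)} {x y : ℝ}

theorem pd1_eq_fderiv (h : DifferentiableAt ℝ (fun p : ℝ × ℝ => F p.1 p.2) (x, y)) :
    pd1 F x y = fderiv ℝ (fun p : ℝ × ℝ => F p.1 p.2) (x, y) (1, 0) :=
  (h.hasFDerivAt.comp_hasDerivAt (f := fun t => (t, y)) x
    ((hasDerivAt_id x).prodMk (hasDerivAt_const x y))).deriv

theorem pd2_eq_fderiv (h : DifferentiableAt ℝ (fun p : ℝ × ℝ => F p.1 p.2) (x, y)) :
    pd2 F x y = fderiv ℝ (fun p : ℝ × ℝ => F p.1 p.2) (x, y) (0, 1) :=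
  (h.hasFDerivAt.comp_hasDerivAt (f := fun t => (x, t)) y
    ((hasDerivAt_const y x).prodMk (hasDerivAt_id y))).deriv

theorem hasDerivAt_pd1 (h : DifferentiableAt ℝ (fun p : ℝ × ℝ => F p.1 p.2) (x, y)) :
    HasDerivAt (fun t => F t y) (pd1 F x y) x :=
  (h.comp (f := fun t => (t, y)) x
    ((hasDerivAt_id x).prodMk (hasDerivAt_const x y)).differentiableAt).hasDerivAt

theorem hasDerivAt_pd2 (h : DifferentiableAt ℝ (fun p : ℝ × ℝ => F p.1 p.2) (x, y)) :
    HasDerivAt (fun t => F x t) (pd2 F x y) y :=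
  (h.comp (f := fun t => (x, t)) y
    ((hasDerivAt_const y x).prodMk (hasDerivAt_id y)).differentiableAt).hasDerivAt

variable {n m : WithTop ℕ∞}

theorem contDiffOn_pd1 (hF : ContDiffOn ℝ n (fun p : ℝ × ℝ => F p.1 p.2) U) (hU : IsOpen U)
    (hmn : m + 1 ≤ n) : ContDiffOn ℝ m (fun p : ℝ × ℝ => pd1 F p.1 p.2) U := by
  have hn : n ≠ 0 := fun h0 => by simp [h0] at hmn
  exact ((hF.fderiv_of_isOpen hU hmn).clm_apply contDiffOn_const).congr fun p hp =>
    pd1_eq_fderiv ((hF.contDiffAt (hU.mem_nhds hp)).differentiableAt hn)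

theorem contDiffOn_pd2 (hF : ContDiffOn ℝ n (fun p : ℝ × ℝ => F p.1 p.2) U) (hU : IsOpen U)
    (hmn : m + 1 ≤ n) : ContDiffOn ℝ m (fun p : ℝ × ℝ => pd2 F p.1 p.2) U := by
  have hn : n ≠ 0 := fun h0 => by simp [h0] at hmn
  exact ((hF.fderiv_of_isOpen hU hmn).clm_apply contDiffOn_const).congr fun p hp =>
    pd2_eq_fderiv ((hF.contDiffAt (hU.mem_nhds hp)).differentiableAt hn)

end PartialDerivatives

theorem pd1_neg (v : ℝ → ℝ → ℝ) : pd1 (fun a b => -v a b) = fun a b => -pd1 v a b := by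
  funext a b
  exact deriv.neg

theorem pd2_neg (v : ℝ → ℝ → ℝ) : pd2 (fun a b => -v a b) = fun a b => -pd2 v a b := by
  funext a b
  exact deriv.neg

theorem lap_neg (v : ℝ → ℝ → ℝ) (x y : ℝ) : lap (fun a b => -v a b) x y = -lap v x y := by
  simp only [lap, pd1_neg, pd2_neg]
  ring

theorem gradSq_neg (v : ℝ → ℝ → ℝ) (x y : ℝ) : gradSq (fun a b => -v a b) x y = gradSq v x y := by
  simp only [gradSq, pd1_neg, pd2_neg, neg_sq]

theorem lap_add_mul_sq {F : ℝ → ℝ → ℝ} {U : Set (ℝ × ℝ)} (hU : IsOpen U)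
    (hF : ContDiffOn ℝ 2 (fun p : ℝ × ℝ => F p.1 p.2) U) (ε : ℝ) {x y : ℝ} (h : (x, y) ∈ U) :
    lap (fun a b => F a b + ε * b ^ 2) x y = lap F x y + 2 * ε := by
  have h11 : pd1 (fun a b => F a b + ε * b ^ 2) = pd1 F := by
    funext a b
    exact deriv_add_const _
  have hline : ∀ᶠ t in 𝓝 y, (x, t) ∈ U :=
    (hU.preimage (by fun_prop : Continuous fun t : ℝ => (x, t))).mem_nhds h
  have h2 : (fun t => pd2 (fun a b => F a b + ε * b ^ 2) x t) =ᶠ[𝓝 y]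
      fun t => pd2 F x t + ε * (2 * t) := by
    filter_upwards [hline] with t ht
    have hsq : HasDerivAt (fun s : ℝ => ε * s ^ 2) (ε * (2 * t)) t := by
      simpa using (hasDerivAt_pow 2 t).const_mul ε
    exact ((hasDerivAt_pd2 ((hF.contDiffAt (hU.mem_nhds ht)).differentiableAt two_ne_zero)).add
      hsq).deriv
  have hF2 : DifferentiableAt ℝ (fun p : ℝ × ℝ => pd2 F p.1 p.2) (x, y) :=
    ((contDiffOn_pd2 (m := 1) hF hU le_rfl).contDiffAt (hU.mem_nhds h)).differentiableAt one_ne_zero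
  have hlin : HasDerivAt (fun t : ℝ => ε * (2 * t)) (2 * ε) y := by
    simpa [mul_comm] using ((hasDerivAt_id y).const_mul 2).const_mul ε
  have h22 : pd2 (pd2 (fun a b => F a b + ε * b ^ 2)) x y = pd2 (pd2 F) x y + 2 * ε :=
    h2.deriv_eq.trans ((hasDerivAt_pd2 hF2).add hlin).deriv
  simp only [lap, h11, h22]
  ring

theorem not_isLocalMax_of_lap_pos {v : ℝ → ℝ → ℝ} {q : ℝ × ℝ}
    (hc : ContinuousAt (fun p : ℝ × ℝ => v p.1 p.2) q) (hlap : 0 < lap v q.1 q.2) :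
    ¬IsLocalMax (fun p : ℝ × ℝ => v p.1 p.2) q := by
  intro hmax
  have hhor : Tendsto (fun t => (t, q.2)) (𝓝 q.1) (𝓝 q) :=
    (by fun_prop : Continuous fun t : ℝ => (t, q.2)).tendsto' _ _ rfl
  have hver : Tendsto (fun t => (q.1, t)) (𝓝 q.2) (𝓝 q) :=
    (by fun_prop : Continuous fun t : ℝ => (q.1, t)).tendsto' _ _ rfl
  have h1 := IsLocalMax.deriv_deriv_nonpos (g := fun t => v t q.2) (hhor.eventually hmax)
    (hc.comp (f := fun t => (t, q.2)) hhor)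
  have h2 := IsLocalMax.deriv_deriv_nonpos (g := fun t => v q.1 t) (hver.eventually hmax)
    (hc.comp (f := fun t => (q.1, t)) hver)
  exact hlap.not_ge (add_nonpos h1 h2)

section Slab

variable {f : ℝ → ℝ} {T c B M x y : ℝ}

theorem le_max_of_lap_pos_of_periodic (hfc : Continuous f) (hT : 0 < T)
    (hper : Function.Periodic f T) {v : ℝ → ℝ → ℝ}
    (hvc : ContinuousOn (fun p : ℝ × ℝ => v p.1 p.2) {p : ℝ × ℝ | f p.1 ≤ p.2})
    (hlap : ∀ p : ℝ × ℝ, f p.1 < p.2 → 0 < lap v p.1 p.2)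
    (hperv : ∀ x y, v (x + T) y = v x y)
    (hbot : ∀ t, f t ≤ M → v t (f t) ≤ c) (htop : ∀ t, v t M ≤ B)
    (hxy : f x ≤ y) (hyM : y ≤ M) : v x y ≤ max c B := by
  obtain ⟨m, hm⟩ := (hper.compact_of_continuous hT.ne' hfc).bddBelow
  set S := {p : ℝ × ℝ | f p.1 ≤ p.2 ∧ p.2 ≤ M}
  set K := (Icc 0 T ×ˢ Icc m M) ∩ S
  have hK : IsCompact K := (isCompact_Icc.prod isCompact_Icc).inter_right
    ((isClosed_le (by fun_prop) continuous_snd).inter (isClosed_le continuous_snd (by fun_prop)))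
  have hSK : ∀ p ∈ S, ∃ p' ∈ K, v p'.1 p'.2 = v p.1 p.2 := by
    rintro ⟨x, y⟩ ⟨hxy, hyM⟩
    have hper' : Function.Periodic (fun t => (f t, v t y)) T := fun t => by
      simp only [hper t, hperv t y]
    obtain ⟨x', hx', hx'eq⟩ := hper'.exists_mem_Ico₀ hT x
    simp only [Prod.mk.injEq] at hx'eq
    refine ⟨(x', y), ⟨⟨Ico_subset_Icc_self hx', (hm (mem_range_self x')).trans ?_, hyM⟩,
      ?_, hyM⟩, hx'eq.2.symm⟩ <;> simpa only [← hx'eq.1] using hxy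
  obtain ⟨p₀, hp₀K, hp₀⟩ := hSK (x, y) ⟨hxy, hyM⟩
  obtain ⟨q, hqK, hqmax⟩ := hK.exists_isMaxOn ⟨p₀, hp₀K⟩ (hvc.mono fun p hp => hp.2.1)
  have hmaxS : ∀ p ∈ S, v p.1 p.2 ≤ v q.1 q.2 := fun p hp => by
    obtain ⟨p', hp'K, hp'⟩ := hSK p hp
    exact hp' ▸ hqmax hp'K
  have hbdry : q.2 = f q.1 ∨ q.2 = M := by
    by_contra! hint
    have hlt : f q.1 < q.2 := lt_of_le_of_ne hqK.2.1 (Ne.symm hint.1)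
    have hopen : IsOpen {p : ℝ × ℝ | f p.1 < p.2} := isOpen_lt (by fun_prop) continuous_snd
    refine not_isLocalMax_of_lap_pos (hvc.continuousAt ?_) (hlap q hlt) ?_
    · filter_upwards [hopen.mem_nhds hlt] with p hp using hp.le
    · filter_upwards [(hopen.inter (isOpen_lt continuous_snd continuous_const)).mem_nhds
        ⟨hlt, lt_of_le_of_ne hqK.2.2 hint.2⟩] with p hp using hmaxS p ⟨hp.1.le, hp.2.le⟩
  calc v x y = v p₀.1 p₀.2 := hp₀.symm
    _ ≤ v q.1 q.2 := hqmax hp₀K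
    _ ≤ max c B := by
      rcases hbdry with hq | hq <;> rw [hq]
      · exact (hbot q.1 (hq ▸ hqK.2.2)).trans (le_max_left c B)
      · exact (htop q.1).trans (le_max_right c B)

theorem le_max_of_harmonic_of_periodic (hfc : Continuous f) (hT : 0 < T)
    (hper : Function.Periodic f T) {u : ℝ → ℝ → ℝ}
    (huc : ContinuousOn (fun p : ℝ × ℝ => u p.1 p.2) {p : ℝ × ℝ | f p.1 ≤ p.2})
    (hsm : ContDiffOn ℝ 2 (fun p : ℝ × ℝ => u p.1 p.2) {p : ℝ × ℝ | f p.1 < p.2})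
    (hharm : ∀ p : ℝ × ℝ, f p.1 < p.2 → lap u p.1 p.2 = 0)
    (hperu : ∀ x y, u (x + T) y = u x y)
    (hbot : ∀ t, u t (f t) ≤ c) (htop : ∀ t, u t M ≤ B)
    (hxy : f x ≤ y) (hyM : y ≤ M) : u x y ≤ max c B := by
  obtain ⟨m, hm⟩ := (hper.compact_of_continuous hT.ne' hfc).bddBelow
  have hsq : ∀ {s : ℝ}, m ≤ s → s ≤ M → s ^ 2 ≤ m ^ 2 + M ^ 2 + 1 := fun {s} h1 h2 => by
    rcases le_total 0 s with h | h <;> nlinarith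
  refine le_of_forall_pos_le_add fun ε hε => ?_
  set κ := ε / (m ^ 2 + M ^ 2 + 1)
  have hκ : 0 < κ := by positivity
  have hκε : ∀ {s : ℝ}, m ≤ s → s ≤ M → κ * s ^ 2 ≤ ε := fun h1 h2 => by
    calc κ * _ ≤ κ * (m ^ 2 + M ^ 2 + 1) := by gcongr; exact hsq h1 h2
      _ = ε := div_mul_cancel₀ _ (by positivity)
  have hopen : IsOpen {p : ℝ × ℝ | f p.1 < p.2} := isOpen_lt (by fun_prop) continuous_snd
  have hv := le_max_of_lap_pos_of_periodic (v := fun a b => u a b + κ * b ^ 2)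
    (c := c + ε) (B := B + ε) hfc hT hper (huc.add (by fun_prop))
    (fun p hp => by rw [lap_add_mul_sq hopen hsm κ hp, hharm p hp]; positivity)
    (fun a b => by rw [hperu]) (fun t ht => by
      have := hbot t; have := hκε (hm (mem_range_self t)) ht; linarith)
    (fun t => by
      have := htop t; have := hκε ((hm (mem_range_self x)).trans (hxy.trans hyM)) le_rfl
      linarith) hxy hyM
  have : 0 ≤ κ * y ^ 2 := by positivity
  rw [max_add_add_right] at hv
  linarith

end Slab

theorem intervalIntegral_integral_swap_of_continuousOn {g : ℝ × ℝ → ℝ} {a b c d : ℝ}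
    (hab : a ≤ b) (hcd : c ≤ d) (hg : ContinuousOn g (Icc a b ×ˢ Icc c d)) :
    ∫ t in a..b, ∫ s in c..d, g (t, s) = ∫ s in c..d, ∫ t in a..b, g (t, s) := by
  have hint : Integrable g ((volume.restrict (Ioc a b)).prod (volume.restrict (Ioc c d))) := by
    rw [Measure.prod_restrict, ← Measure.volume_eq_prod]
    exact (hg.integrableOn_compact (isCompact_Icc.prod isCompact_Icc)).mono_set
      (prod_mono Ioc_subset_Icc_self Ioc_subset_Icc_self)
  simp only [intervalIntegral.integral_of_le hab, intervalIntegral.integral_of_le hcd]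
  exact integral_integral_swap (f := fun t s => g (t, s)) hint

theorem integral_sub_integral_eq_integral_integral_pd2 {F : ℝ → ℝ → ℝ} {U : Set (ℝ × ℝ)}
    (hU : IsOpen U) (hF : ContDiffOn ℝ 1 (fun p : ℝ × ℝ => F p.1 p.2) U) {a b c d : ℝ}
    (hab : a ≤ b) (hcd : c ≤ d) (hR : Icc a b ×ˢ Icc c d ⊆ U) :
    (∫ t in a..b, F t d) - ∫ t in a..b, F t c = ∫ s in c..d, ∫ t in a..b, pd2 F t s := by
  have hFc : ContinuousOn (fun p : ℝ × ℝ => F p.1 p.2) (Icc a b ×ˢ Icc c d) :=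
    hF.continuousOn.mono hR
  have h2c : ContinuousOn (fun p : ℝ × ℝ => pd2 F p.1 p.2) (Icc a b ×ˢ Icc c d) :=
    (contDiffOn_pd2 (m := 0) hF hU le_rfl).continuousOn.mono hR
  have hrow : ∀ s ∈ Icc c d, IntervalIntegrable (fun t => F t s) volume a b := fun s hs =>
    (hFc.comp (by fun_prop : Continuous fun t : ℝ => (t, s)).continuousOn
      fun t ht => ⟨ht, hs⟩).intervalIntegrable_of_Icc hab
  have hftc : ∀ t ∈ uIcc a b, F t d - F t c = ∫ s in c..d, pd2 F t s := fun t ht => by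
    rw [uIcc_of_le hab] at ht
    refine (intervalIntegral.integral_eq_sub_of_hasDerivAt (fun s hs => ?_)
      ((h2c.comp (by fun_prop : Continuous fun s : ℝ => (t, s)).continuousOn
        fun s hs => ⟨ht, hs⟩).intervalIntegrable_of_Icc hcd)).symm
    rw [uIcc_of_le hcd] at hs
    exact hasDerivAt_pd2 ((hF.contDiffAt (hU.mem_nhds (hR ⟨ht, hs⟩))).differentiableAt one_ne_zero)
  rw [← intervalIntegral.integral_sub (hrow d (right_mem_Icc.2 hcd)) (hrow c (left_mem_Icc.2 hcd)),
    intervalIntegral.integral_congr hftc]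
  exact intervalIntegral_integral_swap_of_continuousOn (g := fun p => pd2 F p.1 p.2) hab hcd h2c

theorem exists_lt_intervalIntegral_le_of_integrableOn {W : ℝ × ℝ → ℝ} {a b N ε : ℝ}
    (hab : a ≤ b) (hW : IntegrableOn W (Ioo a b ×ˢ Ioi N)) (hε : 0 < ε) :
    ∃ M, N < M ∧ ∫ t in a..b, W (t, M) ≤ ε := by
  by_contra! hbig
  have hW' : Integrable W ((volume.restrict (Ioo a b)).prod (volume.restrict (Ioi N))) := by
    rw [Measure.prod_restrict, ← Measure.volume_eq_prod]
    exact hW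
  -- otherwise the constant `ε` would be integrable on the half-line `(N, ∞)`
  have hconst : Integrable (fun _ : ℝ => ε) (volume.restrict (Ioi N)) := by
    refine hW'.integral_prod_right.mono aestronglyMeasurable_const ?_
    refine (ae_restrict_iff' measurableSet_Ioi).2 (ae_of_all _ fun M hM => ?_)
    rw [Real.norm_eq_abs, Real.norm_eq_abs, abs_of_pos hε, ← integral_Ioc_eq_integral_Ioo,
      ← intervalIntegral.integral_of_le hab]
    exact (hbig M hM).le.trans (le_abs_self _)
  rcases integrable_const_iff.mp hconst with h | h
  · exact hε.ne' h
  · simpa using h.measure_univ_lt_top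

theorem intervalIntegral_abs_le_of_sq_le {ψ g : ℝ → ℝ} {a b d : ℝ} (hab : a ≤ b)
    (hψ : Continuous ψ) (hg : Continuous g) (hψg : ∀ s, ψ s ^ 2 ≤ g s) (hd : 0 < d) :
    ∫ s in a..b, |ψ s| ≤ (∫ s in a..b, g s) / (2 * d) + (b - a) * (d / 2) := by
  -- AM-GM: `|ψ| ≤ ψ² / (2d) + d / 2`
  have hpt : ∀ s ∈ Icc a b, |ψ s| ≤ g s / (2 * d) + d / 2 := fun s _ => by
    rw [div_add' _ _ _ (by positivity), le_div_iff₀ (by positivity)]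
    nlinarith [sq_nonneg (|ψ s| - d), sq_abs (ψ s), hψg s]
  calc ∫ s in a..b, |ψ s| ≤ ∫ s in a..b, (g s / (2 * d) + d / 2) :=
        intervalIntegral.integral_mono_on hab (hψ.abs.intervalIntegrable _ _)
          ((by fun_prop : Continuous fun s => g s / (2 * d) + d / 2).intervalIntegrable _ _) hpt
    _ = (∫ s in a..b, g s) / (2 * d) + (b - a) * (d / 2) := by
        rw [intervalIntegral.integral_add ((hg.div_const _).intervalIntegrable _ _)
          intervalIntegrable_const, intervalIntegral.integral_div,
          intervalIntegral.integral_const, smul_eq_mul]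

section Periodic

variable {h : ℝ → ℝ} {T : ℝ}

theorem Function.Periodic.le_average_add_integral_abs_deriv {h' : ℝ → ℝ} (hT : 0 < T)
    (hper : Function.Periodic h T) (hd : ∀ t, HasDerivAt h (h' t) t) (hc : Continuous h')
    (t : ℝ) : h t ≤ (∫ s in 0..T, h s) / T + ∫ s in 0..T, |h' s| := by
  set Q := ∫ s in 0..T, |h' s|
  have hosc : ∀ s, h t - h s ≤ Q := fun s => by
    obtain ⟨t', ht', htt'⟩ := hper.exists_mem_Ico₀ hT t
    obtain ⟨s', hs', hss'⟩ := hper.exists_mem_Ico₀ hT s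
    rw [htt', hss', ← intervalIntegral.integral_eq_sub_of_hasDerivAt (fun x _ => hd x)
      (hc.intervalIntegrable _ _)]
    calc ∫ x in s'..t', h' x ≤ |(∫ x in s'..t', |h' x|)| := by
          simpa only [Real.norm_eq_abs] using
            (le_abs_self _).trans (intervalIntegral.norm_integral_le_abs_integral_norm (f := h'))
      _ ≤ |Q| := intervalIntegral.abs_integral_mono_interval
          (Ioc_subset_Ioc (le_inf hs'.1 ht'.1) (sup_le hs'.2.le ht'.2.le) |>.trans_eq
            (uIoc_of_le hT.le).symm)
          (ae_of_all _ fun _ => abs_nonneg _) (hc.abs.intervalIntegrable _ _)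
      _ = Q := abs_of_nonneg (intervalIntegral.integral_nonneg hT.le fun _ _ => abs_nonneg _)
  have hcont : Continuous h := continuous_iff_continuousAt.2 fun x => (hd x).continuousAt
  have hmean : T * (h t - Q) ≤ ∫ s in 0..T, h s := by
    calc T * (h t - Q) = ∫ _ in 0..T, (h t - Q) := by simp [mul_sub]
      _ ≤ ∫ s in 0..T, h s := intervalIntegral.integral_mono_on hT.le intervalIntegrable_const
          (hcont.intervalIntegrable _ _) fun s _ => by linarith [hosc s]
  rw [← sub_le_iff_le_add, le_div_iff₀ hT]
  linarith

theorem Function.Periodic.eq_of_le_of_integral_eq {a : ℝ} (hT : 0 < T)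
    (hper : Function.Periodic h T) (hc : Continuous h) (hle : ∀ t, h t ≤ a)
    (hint : ∫ t in 0..T, h t = T * a) (t : ℝ) : h t = a := by
  obtain ⟨t', ht', htt'⟩ := hper.exists_mem_Ico₀ hT t
  rw [htt']
  by_contra hne
  have := intervalIntegral.integral_lt_integral_of_continuousOn_of_le_of_exists_lt hT
    hc.continuousOn continuousOn_const (fun x _ => hle x)
    ⟨t', Ico_subset_Icc_self ht', lt_of_le_of_ne (hle t') hne⟩
  simp [hint] at this

end Periodic

theorem pd1_add_of_periodic {u : ℝ → ℝ → ℝ} {T : ℝ} (hperu : ∀ x y, u (x + T) y = u x y)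
    (x y : ℝ) : pd1 u (x + T) y = pd1 u x y := by
  simp only [pd1, ← deriv_comp_add_const, hperu]

section Cell

variable {f : ℝ → ℝ} {u : ℝ → ℝ → ℝ} (hfc : Continuous f)
  (hsm : ContDiffOn ℝ 2 (fun p : ℝ × ℝ => u p.1 p.2) {p : ℝ × ℝ | f p.1 < p.2})
  (hharm : ∀ p : ℝ × ℝ, f p.1 < p.2 → lap u p.1 p.2 = 0)
  (hperu : ∀ x y, u (x + 2 * π) y = u x y)
  (hE : IntegrableOn (fun p : ℝ × ℝ => gradSq u p.1 p.2)
    {p : ℝ × ℝ | 0 < p.1 ∧ p.1 < 2 * π ∧ f p.1 < p.2})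

include hfc hsm hharm hperu in
theorem integral_pd2_eq_of_le {s₁ s₂ : ℝ} (hs₁ : ∀ t, f t < s₁) (h12 : s₁ ≤ s₂) :
    ∫ t in 0..2 * π, pd2 u t s₂ = ∫ t in 0..2 * π, pd2 u t s₁ := by
  have hU : IsOpen {p : ℝ × ℝ | f p.1 < p.2} := isOpen_lt (by fun_prop) continuous_snd
  have h1 := contDiffOn_pd1 (m := 1) hsm hU le_rfl
  have hzero : ∀ s ∈ uIcc s₁ s₂, ∫ t in 0..2 * π, pd2 (pd2 u) t s = 0 := fun s hs => by
    rw [uIcc_of_le h12] at hs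
    have hmem : ∀ t, f t < s := fun t => (hs₁ t).trans_le hs.1
    calc ∫ t in 0..2 * π, pd2 (pd2 u) t s = ∫ t in 0..2 * π, -pd1 (pd1 u) t s :=
          intervalIntegral.integral_congr fun t _ => by
            have := hharm (t, s) (hmem t)
            unfold lap at this
            linarith
      _ = -(pd1 u (0 + 2 * π) s - pd1 u 0 s) := by
          rw [intervalIntegral.integral_neg, zero_add,
            intervalIntegral.integral_eq_sub_of_hasDerivAt (fun t _ => hasDerivAt_pd1
              ((h1.contDiffAt (hU.mem_nhds (hmem t))).differentiableAt one_ne_zero))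
              (((contDiffOn_pd1 (m := 0) h1 hU le_rfl).continuousOn.comp_continuous
                (by fun_prop : Continuous fun t : ℝ => (t, s)) hmem).intervalIntegrable _ _)]
      _ = 0 := by rw [pd1_add_of_periodic hperu, sub_self, neg_zero]
  have hflux := integral_sub_integral_eq_integral_integral_pd2 hU
    (contDiffOn_pd2 (m := 1) hsm hU le_rfl) two_pi_pos.le h12
    fun p hp => (hs₁ p.1).trans_le hp.2.1
  rwa [intervalIntegral.integral_congr hzero, intervalIntegral.integral_zero, sub_eq_zero] at hflux

include hfc hsm hE in
theorem exists_height_integral_abs_pd_le {N η : ℝ} (hN : ∀ t, f t < N) (hη : 0 < η) :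
    ∃ M, N < M ∧ ∫ t in 0..2 * π, |pd1 u t M| ≤ η ∧ ∫ t in 0..2 * π, |pd2 u t M| ≤ η := by
  have hU : IsOpen {p : ℝ × ℝ | f p.1 < p.2} := isOpen_lt (by fun_prop) continuous_snd
  set d := η / (2 * π)
  have hd : 0 < d := by positivity
  obtain ⟨M, hNM, hM⟩ := exists_lt_intervalIntegral_le_of_integrableOn (ε := η * d)
    (W := fun p => gradSq u p.1 p.2) two_pi_pos.le
    (hE.mono_set fun p hp => ⟨hp.1.1, hp.1.2, (hN p.1).trans hp.2⟩) (by positivity)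
  have hmem : ∀ t, f t < M := fun t => (hN t).trans hNM
  have hc1 : Continuous fun t => pd1 u t M :=
    (contDiffOn_pd1 (m := 0) hsm hU (by norm_num)).continuousOn.comp_continuous
      (by fun_prop : Continuous fun t : ℝ => (t, M)) hmem
  have hc2 : Continuous fun t => pd2 u t M :=
    (contDiffOn_pd2 (m := 0) hsm hU (by norm_num)).continuousOn.comp_continuous
      (by fun_prop : Continuous fun t : ℝ => (t, M)) hmem
  have hsmall : ∀ ψ : ℝ → ℝ, Continuous ψ → (∀ t, ψ t ^ 2 ≤ gradSq u t M) →
      ∫ t in 0..2 * π, |ψ t| ≤ η := fun ψ hψ hψg => by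
    refine (intervalIntegral_abs_le_of_sq_le two_pi_pos.le hψ (by unfold gradSq; fun_prop)
      hψg hd).trans ?_
    calc (∫ t in 0..2 * π, gradSq u t M) / (2 * d) + (2 * π - 0) * (d / 2)
        ≤ η * d / (2 * d) + (2 * π - 0) * (d / 2) := by gcongr
      _ = η := by
        have : d * (2 * π) = η := div_mul_cancel₀ _ (by positivity)
        field_simp
        linarith
  exact ⟨M, hNM, hsmall _ hc1 fun t => le_add_of_nonneg_right (sq_nonneg _),
    hsmall _ hc2 fun t => le_add_of_nonneg_left (sq_nonneg _)⟩

include hfc hsm hharm hperu hE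

theorem integral_pd2_eq_zero {s : ℝ} (hs : ∀ t, f t < s) : ∫ t in 0..2 * π, pd2 u t s = 0 := by
  refine abs_nonpos_iff.1 (le_of_forall_pos_le_add fun η hη => ?_)
  obtain ⟨M, hsM, -, hM⟩ := exists_height_integral_abs_pd_le hfc hsm hE hs hη
  rw [← integral_pd2_eq_of_le hfc hsm hharm hperu hs hsM.le, zero_add]
  exact (intervalIntegral.abs_integral_le_integral_abs two_pi_pos.le).trans hM

theorem integral_eq_of_forall_lt {s₁ s₂ : ℝ} (hs₁ : ∀ t, f t < s₁) (hs₂ : ∀ t, f t < s₂) :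
    ∫ t in 0..2 * π, u t s₁ = ∫ t in 0..2 * π, u t s₂ := by
  wlog h12 : s₁ ≤ s₂ generalizing s₁ s₂
  · exact (this hs₂ hs₁ (le_of_not_ge h12)).symm
  have hU : IsOpen {p : ℝ × ℝ | f p.1 < p.2} := isOpen_lt (by fun_prop) continuous_snd
  have hmean := integral_sub_integral_eq_integral_integral_pd2 hU (hsm.of_le one_le_two)
    two_pi_pos.le h12 fun p hp => (hs₁ p.1).trans_le hp.2.1
  rw [intervalIntegral.integral_congr (g := fun _ => 0) fun s hs =>
    integral_pd2_eq_zero hfc hsm hharm hperu hE fun t =>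
      (hs₁ t).trans_le (uIcc_of_le h12 ▸ hs).1,
    intervalIntegral.integral_zero, sub_eq_zero] at hmean
  exact hmean.symm

theorem le_max_average (hper : Function.Periodic f (2 * π))
    (huc : ContinuousOn (fun p : ℝ × ℝ => u p.1 p.2) {p : ℝ × ℝ | f p.1 ≤ p.2})
    {c s₀ x y : ℝ} (hs₀ : ∀ t, f t < s₀) (hbot : ∀ t, u t (f t) ≤ c) (hxy : f x ≤ y) :
    u x y ≤ max c ((∫ t in 0..2 * π, u t s₀) / (2 * π)) := by
  have hU : IsOpen {p : ℝ × ℝ | f p.1 < p.2} := isOpen_lt (by fun_prop) continuous_snd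
  set a := (∫ t in 0..2 * π, u t s₀) / (2 * π)
  refine le_of_forall_pos_le_add fun η hη => ?_
  obtain ⟨M, hM, hM1, -⟩ := exists_height_integral_abs_pd_le hfc hsm hE
    (N := max y s₀) (fun t => (hs₀ t).trans_le (le_max_right _ _)) hη
  have hmem : ∀ t, f t < M := fun t => (hs₀ t).trans (le_max_right _ _ |>.trans_lt hM)
  have htop : ∀ t, u t M ≤ a + η := fun t => by
    have := Function.Periodic.le_average_add_integral_abs_deriv (h' := fun t => pd1 u t M)
      two_pi_pos (fun t => hperu t M)
      (fun t => hasDerivAt_pd1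
        ((hsm.contDiffAt (hU.mem_nhds (hmem t))).differentiableAt two_ne_zero))
      ((contDiffOn_pd1 (m := 0) hsm hU (by norm_num)).continuousOn.comp_continuous
        (by fun_prop : Continuous fun t : ℝ => (t, M)) hmem) t
    rw [integral_eq_of_forall_lt hfc hsm hharm hperu hE hmem hs₀] at this
    linarith
  calc u x y ≤ max c (a + η) := le_max_of_harmonic_of_periodic hfc two_pi_pos hper huc hsm
        hharm hperu hbot htop hxy ((le_max_left _ _).trans hM.le)
    _ ≤ max c a + η := max_le (le_add_of_le_of_nonneg (le_max_left _ _) hη.le)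
        (add_le_add_left (le_max_right _ _) _)

end Cell

namespace CellSolution

variable {f g : ℝ → ℝ} {u : ℝ → ℝ → ℝ}

theorem neg (hu : CellSolution f g u) : CellSolution f (fun t => -g t) (fun a b => -u a b) where
  cont := hu.cont.neg
  periodic a b := by rw [hu.periodic]
  smooth := hu.smooth.neg
  harmonic p hp := by rw [lap_neg, hu.harmonic p hp, neg_zero]
  bc t := by rw [hu.bc]
  energy := by simpa only [gradSq_neg] using hu.energy

theorem le_of_forall_le (hfc : Continuous f) (hper : Function.Periodic f (2 * π))
    (hu : CellSolution f g u) {c : ℝ} (hg : ∀ t, g t ≤ c) {x y : ℝ} (hxy : f x ≤ y) :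
    u x y ≤ c := by
  obtain ⟨_, ⟨t₀, rfl⟩, ht₀⟩ :=
    (hper.compact_of_continuous two_pi_pos.ne' hfc).exists_isGreatest (range_nonempty f)
  have habove : ∀ {s}, f t₀ < s → ∀ t, f t < s := fun hs t =>
    (ht₀ (mem_range_self t)).trans_lt hs
  set a := (∫ t in 0..2 * π, u t (f t₀ + 1)) / (2 * π)
  have hle : ∀ {x y}, f x ≤ y → u x y ≤ max c a := fun hxy =>
    le_max_average hfc hu.smooth hu.harmonic hu.periodic hu.energy hper hu.cont
      (habove (lt_add_one _)) (fun t => (hu.bc t).trans_le (hg t)) hxy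
  suffices a ≤ c from (hle hxy).trans (max_le le_rfl this)
  by_contra! hca
  have hmean : ∀ {s}, f t₀ < s → ∫ t in 0..2 * π, u t s = 2 * π * a := fun hs => by
    rw [integral_eq_of_forall_lt hfc hu.smooth hu.harmonic hu.periodic hu.energy (habove hs)
      (habove (lt_add_one _))]
    exact (mul_div_cancel₀ _ two_pi_pos.ne').symm
  have hline : EqOn (fun s => u t₀ s) (fun _ => a) (Ioi (f t₀)) := fun s hs =>
    Function.Periodic.eq_of_le_of_integral_eq (h := fun t => u t s) two_pi_pos
      (fun t => hu.periodic t s)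
      (hu.smooth.continuousOn.comp_continuous (by fun_prop : Continuous fun t : ℝ => (t, s))
        (habove hs))
      (fun t => (hle (habove hs t).le).trans_eq (max_eq_right hca.le)) (hmean hs) t₀
  have hcont : ContinuousOn (fun s => u t₀ s) (Ici (f t₀)) :=
    hu.cont.comp (by fun_prop : Continuous fun s : ℝ => (t₀, s)).continuousOn fun _ hs => hs
  have hbdry : u t₀ (f t₀) = a := hline.of_subset_closure hcont continuousOn_const
    Ioi_subset_Ici_self (by rw [closure_Ioi]) (mem_Ici.2 le_rfl)
  linarith [hu.bc t₀ ▸ hg t₀]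

end CellSolution

theorem interfaceAvg_mem_Icc {β : ℝ → ℝ → ℝ} {m M : ℝ} (hβ : Continuous fun t => β t 0)
    (hbd : ∀ t, β t 0 ∈ Icc m M) : interfaceAvg β ∈ Icc m M := by
  have hlo := intervalIntegral.integral_mono_on two_pi_pos.le
    (intervalIntegrable_const (μ := volume))
    (hβ.intervalIntegrable _ _) fun t _ => (hbd t).1
  have hhi := intervalIntegral.integral_mono_on two_pi_pos.le (hβ.intervalIntegrable _ _)
    (intervalIntegrable_const (μ := volume)) fun t _ => (hbd t).2
  simp only [intervalIntegral.integral_const, smul_eq_mul, sub_zero] at hlo hhi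
  unfold interfaceAvg
  constructor
  · rw [one_div_mul_eq_div, le_div_iff₀ two_pi_pos]
    linarith
  · rw [one_div_mul_eq_div, div_le_iff₀ two_pi_pos]
    linarith

theorem second_order_cell_solution_bounds_general
    (f : ℝ → ℝ) (K : NNReal) (δ : ℝ)
    (hf : LipschitzWith K f) (hper : Function.Periodic f (2 * π))
    (hδ0 : 0 < δ) (hfb : ∀ t, -1 ≤ f t ∧ f t ≤ -δ)
    (γ : ℝ → ℝ → ℝ) (hγ : CellSolution f (fun t => -(f t) ^ 2) γ) :
    (∀ y₁ y₂ : ℝ, f y₁ ≤ y₂ → -1 ≤ γ y₁ y₂ ∧ γ y₁ y₂ ≤ 0) ∧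
    -1 ≤ interfaceAvg γ ∧ interfaceAvg γ ≤ 0 := by
  have hfc := hf.continuous
  have hbounds : ∀ y₁ y₂ : ℝ, f y₁ ≤ y₂ → -1 ≤ γ y₁ y₂ ∧ γ y₁ y₂ ≤ 0 := fun y₁ y₂ hy =>
    ⟨neg_le.1 (hγ.neg.le_of_forall_le hfc hper (fun t => by nlinarith [hfb t]) hy),
      hγ.le_of_forall_le hfc hper (fun t => neg_nonpos.2 (sq_nonneg _)) hy⟩
  have hf0 : ∀ t, f t ≤ 0 := fun t => (hfb t).2.trans (neg_nonpos.2 hδ0.le)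
  exact ⟨hbounds, interfaceAvg_mem_Icc
    (hγ.cont.comp_continuous (by fun_prop : Continuous fun t : ℝ => (t, (0 : ℝ))) hf0)
    fun t => hbounds t 0 (hf0 t)⟩

/-- Bounds for the second-order cell solution: `−1 ≤ γ ≤ 0` above the rough boundary;
in particular `γ̄ ∈ [−1,0]`. -/
theorem second_order_cell_solution_bounds
    (f : ℝ → ℝ) (K : NNReal) (δ : ℝ)
    (hf : LipschitzWith K f) (hper : Function.Periodic f (2 * π))
    (hδ0 : 0 < δ) (hδ1 : δ < 1) (hfb : ∀ t, -1 ≤ f t ∧ f t ≤ -δ)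
    (γ : ℝ → ℝ → ℝ) (hγ : CellSolution f (fun t => -(f t) ^ 2) γ) :
    (∀ y₁ y₂ : ℝ, f y₁ ≤ y₂ → -1 ≤ γ y₁ y₂ ∧ γ y₁ y₂ ≤ 0) ∧
    -1 ≤ interfaceAvg γ ∧ interfaceAvg γ ≤ 0 :=
  second_order_cell_solution_bounds_general f K δ hf hper hδ0 hfb γ hγ
end
end

section
/- Optimality of the √ε rate for the oscillating boundary layer: if η_{k₀} ≠ 0 for some k₀ ≠ 0, then there exist constants c > 0 and ε₀ ∈ (0,1] such that for every ε ∈ (0,ε₀] with L/(2πε) a positive integer, (∫_{(0,L)×(0,1)} |β(x₁/ε, x₂/ε) − η₀|² dx)^{1/2} ≥ c √ε. (Hence the oscillations of the first-order boundary layer are of order √ε in L²(Ω⁰), larger than any O(ε²) macroscopic second-order correction, so averaged second-order wall-laws cannot improve on first-order ones.) -/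
/-!
Since `η₋ₖ = conj ηₖ`, the series is real, and on every horizontal line `x₂ = t` the function
`x₁ ↦ β(x₁/ε, t) - η₀` has, over the period `L = 2πεN`, the Fourier coefficient
`L ηₖ₀ e^{-|k₀| t}` at the frequency `k₀/ε`: the series converges absolutely for `t > 0`, so it can
be integrated termwise against `e^{-i k₀ x₁/ε}`, and all other modes integrate to zero. Hence
`L |ηₖ₀| e^{-|k₀| t} ≤ ∫ |β - η₀| dx₁`, and Cauchy–Schwarz in `x₁` turns this into
`L |ηₖ₀|² e^{-2|k₀| t} ≤ ∫ (β - η₀)² dx₁`. On the layer `0 < x₂ < ε` we have `t = x₂/ε ≤ 1`, so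
integrating in `x₂` over that layer gives `∫_{Ω⁰} (β - η₀)² ≥ ε L |ηₖ₀|² e^{-2|k₀|}`.

For this the integrand must be integrable on `Ω⁰` (otherwise its Bochner integral is `0`):
Cauchy–Schwarz against the weights `1 + |k|` bounds its square by `C (1 + (x₂/ε)^{-1/2})`.
-/

open MeasureTheory Real Set

noncomputable section

/-- The Fourier mode `e^{i k y₁ - |k| y₂}`. -/
def fourierMode (k : ℤ) (y₁ y₂ : ℝ) : ℂ :=
  Complex.exp (Complex.I * (k : ℂ) * (y₁ : ℂ) - ((|k| : ℤ) : ℂ) * (y₂ : ℂ))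

/-- The boundary-layer corrector in the upper half plane, given by its Fourier series. -/
def blSeries (η : ℤ → ℂ) (y₁ y₂ : ℝ) : ℝ :=
  (∑' k : ℤ, η k * fourierMode k y₁ y₂).re

open scoped ComplexConjugate

lemma mul_sq_le_integral_sq {α : Type*} [MeasurableSpace α] {μ : Measure α} [IsFiniteMeasure μ]
    {f : α → ℝ} (hf : Integrable f μ) (hf2 : Integrable (fun x ↦ f x ^ 2) μ) {δ : ℝ}
    (hδ : 0 ≤ δ) (h : μ.real univ * δ ≤ ∫ x, |f x| ∂μ) :
    μ.real univ * δ ^ 2 ≤ ∫ x, f x ^ 2 ∂μ := by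
  have hpt : ∀ x, 2 * δ * |f x| - δ ^ 2 ≤ f x ^ 2 := fun x ↦ by
    nlinarith [sq_nonneg (|f x| - δ), sq_abs (f x)]
  have hint := integral_mono (f := fun x ↦ 2 * δ * |f x| - δ ^ 2)
    ((hf.abs.const_mul (2 * δ)).sub (integrable_const _)) hf2 hpt
  rw [integral_sub (hf.abs.const_mul _) (integrable_const _), integral_const_mul, integral_const,
    smul_eq_mul] at hint
  nlinarith

lemma summable_mul_and_sq_tsum_mul_le {ι : Type*} {f g : ι → ℝ} (hf : ∀ i, 0 ≤ f i)
    (hg : ∀ i, 0 ≤ g i) (hf2 : Summable fun i ↦ f i ^ 2) (hg2 : Summable fun i ↦ g i ^ 2) :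
    (Summable fun i ↦ f i * g i) ∧
      (∑' i, f i * g i) ^ 2 ≤ (∑' i, f i ^ 2) * ∑' i, g i ^ 2 := by
  simp_rw [← rpow_two] at hf2 hg2 ⊢
  obtain ⟨hfg, hle⟩ := summable_and_inner_le_Lp_mul_Lq_tsum_of_nonneg .two_two hf hg hf2 hg2
  refine ⟨hfg, ?_⟩
  have hF : 0 ≤ ∑' i, f i ^ (2 : ℝ) := tsum_nonneg fun i ↦ rpow_nonneg (hf i) _
  have hG : 0 ≤ ∑' i, g i ^ (2 : ℝ) := tsum_nonneg fun i ↦ rpow_nonneg (hg i) _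
  calc (∑' i, f i * g i) ^ (2 : ℝ)
      ≤ ((∑' i, f i ^ (2 : ℝ)) ^ (1 / 2 : ℝ) * (∑' i, g i ^ (2 : ℝ)) ^ (1 / 2 : ℝ)) ^ (2 : ℝ) :=
        rpow_le_rpow (tsum_nonneg fun i ↦ mul_nonneg (hf i) (hg i)) hle (by norm_num)
    _ = (∑' i, f i ^ (2 : ℝ)) * ∑' i, g i ^ (2 : ℝ) := by
        rw [mul_rpow (rpow_nonneg hF _) (rpow_nonneg hG _), ← rpow_mul hF, ← rpow_mul hG]
        norm_num

lemma summable_one_add_abs_rpow_neg {s : ℝ} (hs : 1 < s) :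
    Summable fun k : ℤ ↦ (1 + |(k : ℝ)|) ^ (-s) := by
  refine .of_norm_bounded_eventually (summable_abs_int_rpow hs) ?_
  filter_upwards [Filter.eventually_cofinite_ne 0] with k hk
  rw [Real.norm_of_nonneg (by positivity)]
  exact rpow_le_rpow_of_nonpos (abs_pos.mpr (by exact_mod_cast hk)) (by linarith) (by linarith)

lemma exp_neg_le_rpow_neg_half {u : ℝ} (hu : 0 < u) : exp (-u) ≤ u ^ (-(1 / 2) : ℝ) := by
  rw [rpow_neg hu.le, ← sqrt_eq_rpow, exp_neg]
  refine inv_anti₀ (sqrt_pos.mpr hu) ?_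
  calc √u ≤ u + 1 := (sqrt_le_left (by linarith)).mpr (by nlinarith)
    _ ≤ exp u := add_one_le_exp u

lemma exp_neg_abs_mul_div_one_add_abs_le (k : ℤ) {t : ℝ} (ht : 0 < t) :
    exp (-|(k : ℝ)| * (2 * t)) / (1 + |(k : ℝ)|) ≤
      (1 + t ^ (-(1 / 2) : ℝ)) * (1 + |(k : ℝ)|) ^ (-(3 / 2) : ℝ) := by
  set a := 1 + |(k : ℝ)|
  have ha : 0 < a := by positivity
  have ht' : 0 ≤ t ^ (-(1 / 2) : ℝ) := by positivity
  have hexp : exp (-|(k : ℝ)| * (2 * t)) ≤ (1 + t ^ (-(1 / 2) : ℝ)) * a ^ (-(1 / 2) : ℝ) := by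
    rcases eq_or_ne k 0 with rfl | hk
    · simp [a]; positivity
    · have hk1 : 1 ≤ |(k : ℝ)| := by exact_mod_cast Int.one_le_abs hk
      calc exp (-|(k : ℝ)| * (2 * t)) ≤ (2 * |(k : ℝ)| * t) ^ (-(1 / 2) : ℝ) := by
            rw [show -|(k : ℝ)| * (2 * t) = -(2 * |(k : ℝ)| * t) by ring]
            exact exp_neg_le_rpow_neg_half (by positivity)
        _ = (2 * |(k : ℝ)|) ^ (-(1 / 2) : ℝ) * t ^ (-(1 / 2) : ℝ) := mul_rpow (by positivity) ht.le
        _ ≤ a ^ (-(1 / 2) : ℝ) * (1 + t ^ (-(1 / 2) : ℝ)) :=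
            mul_le_mul (rpow_le_rpow_of_nonpos ha (by linarith) (by norm_num)) (by linarith) ht'
              (by positivity)
        _ = _ := mul_comm _ _
  calc exp (-|(k : ℝ)| * (2 * t)) / a
      ≤ (1 + t ^ (-(1 / 2) : ℝ)) * a ^ (-(1 / 2) : ℝ) * a ^ (-1 : ℝ) := by
        rw [rpow_neg_one, div_eq_mul_inv]; gcongr
    _ = _ := by rw [mul_assoc, ← rpow_add ha]; norm_num

lemma norm_fourierMode (k : ℤ) (y₁ y₂ : ℝ) :
    ‖fourierMode k y₁ y₂‖ = exp (-|(k : ℝ)| * y₂) := by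
  simp [fourierMode, Complex.norm_exp]

lemma conj_fourierMode (k : ℤ) (y₁ y₂ : ℝ) :
    conj (fourierMode k y₁ y₂) = fourierMode (-k) y₁ y₂ := by
  simp [fourierMode, ← Complex.exp_conj]

lemma fourierMode_mul_fourierMode_zero (k m : ℤ) (y₁ y₂ : ℝ) :
    fourierMode k y₁ y₂ * fourierMode m y₁ 0 =
      exp (-|(k : ℝ)| * y₂) * fourierMode (k + m) y₁ 0 := by
  have habs : ((|(k : ℝ)| : ℝ) : ℂ) = ((|k| : ℤ) : ℂ) := by norm_cast
  simp only [fourierMode, ← Complex.exp_add, Complex.ofReal_exp, Complex.ofReal_mul,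
    Complex.ofReal_neg, habs]
  push_cast
  ring_nf

@[fun_prop]
lemma Continuous.fourierMode {α : Type*} [TopologicalSpace α] {f g : α → ℝ} (hf : Continuous f)
    (hg : Continuous g) (k : ℤ) : Continuous fun x ↦ _root_.fourierMode k (f x) (g x) := by
  unfold _root_.fourierMode; fun_prop

lemma summable_exp_neg_abs_mul {t : ℝ} (ht : 0 < t) :
    Summable fun k : ℤ ↦ exp (-|(k : ℝ)| * t) := by
  have hgeom : Summable fun n : ℕ ↦ exp (-t) ^ n :=
    summable_geometric_of_lt_one (exp_pos _).le (exp_lt_one_iff.mpr (neg_lt_zero.mpr ht))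
  refine .of_nat_of_neg (hgeom.congr fun n ↦ ?_) (hgeom.congr fun n ↦ ?_) <;>
    simp [← exp_nat_mul, mul_comm]

lemma setIntegral_fourierMode_eq_zero {m : ℤ} (hm : m ≠ 0) {ε : ℝ} (hε : 0 < ε) (N : ℕ) :
    ∫ x in Ioo 0 (2 * π * ε * N), fourierMode m (x / ε) 0 = 0 := by
  have hc : Complex.I * m / ε ≠ 0 := by simp [hm, hε.ne']
  have hmode : ∀ x : ℝ, fourierMode m (x / ε) 0 = Complex.exp (Complex.I * m / ε * x) := by
    intro x; simp only [fourierMode]; push_cast; ring_nf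
  rw [← integral_Ioc_eq_integral_Ioo, ← intervalIntegral.integral_of_le (by positivity)]
  simp_rw [hmode]
  rw [integral_exp_mul_complex hc]
  have hperiod : Complex.I * m / ε * (2 * π * ε * N : ℝ) = (m * N : ℤ) * (2 * π * Complex.I) := by
    have hε' : (ε : ℂ) ≠ 0 := by exact_mod_cast hε.ne'
    push_cast; field_simp
  rw [hperiod, Complex.exp_int_mul_two_pi_mul_I]
  simp

def blSeriesComplex (η : ℤ → ℂ) (y₁ y₂ : ℝ) : ℂ := ∑' k : ℤ, η k * fourierMode k y₁ y₂

section Series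

variable {η : ℤ → ℂ}

lemma ofReal_blSeries (hconj : ∀ k, η (-k) = conj (η k)) (y₁ y₂ : ℝ) :
    (blSeries η y₁ y₂ : ℂ) = blSeriesComplex η y₁ y₂ := by
  refine Complex.conj_eq_iff_re.mp ?_
  calc conj (blSeriesComplex η y₁ y₂)
      = ∑' k : ℤ, η (-k) * fourierMode (-k) y₁ y₂ := by
        rw [blSeriesComplex, Complex.conj_tsum]
        exact tsum_congr fun k ↦ by rw [map_mul, hconj, conj_fourierMode]
    _ = blSeriesComplex η y₁ y₂ := (Equiv.neg ℤ).tsum_eq fun k ↦ η k * fourierMode k y₁ y₂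

lemma norm_blSeriesComplex_le {t : ℝ} (hη : Summable fun k : ℤ ↦ ‖η k‖ * exp (-|(k : ℝ)| * t))
    (y₁ : ℝ) : ‖blSeriesComplex η y₁ t‖ ≤ ∑' k : ℤ, ‖η k‖ * exp (-|(k : ℝ)| * t) := by
  have hnorm : ∀ k, ‖η k * fourierMode k y₁ t‖ = ‖η k‖ * exp (-|(k : ℝ)| * t) := fun k ↦ by
    rw [norm_mul, norm_fourierMode]
  simp_rw [← hnorm] at hη ⊢
  exact norm_tsum_le_tsum_norm hη

lemma continuous_blSeriesComplex_div {t : ℝ}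
    (hη : Summable fun k : ℤ ↦ ‖η k‖ * exp (-|(k : ℝ)| * t)) (ε : ℝ) :
    Continuous fun x ↦ blSeriesComplex η (x / ε) t := by
  refine continuous_tsum (fun k ↦ ?_) hη fun k x ↦ by rw [norm_mul, norm_fourierMode]
  fun_prop

lemma continuousOn_blSeriesComplex
    (hη : ∀ t > 0, Summable fun k : ℤ ↦ ‖η k‖ * exp (-|(k : ℝ)| * t)) :
    ContinuousOn (fun p : ℝ × ℝ ↦ blSeriesComplex η p.1 p.2) {p | 0 < p.2} := by
  intro p hp
  have hU : {q : ℝ × ℝ | p.2 / 2 < q.2} ∈ nhds p :=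
    (isOpen_lt continuous_const continuous_snd).mem_nhds (show p.2 / 2 < p.2 from half_lt_self hp)
  refine (ContinuousOn.continuousAt ?_ hU).continuousWithinAt
  refine continuousOn_tsum (fun k ↦ (by fun_prop : Continuous _).continuousOn)
    (hη _ (half_pos hp)) fun k q hq ↦ ?_
  rw [norm_mul, norm_fourierMode]
  have hq' : p.2 / 2 ≤ q.2 := le_of_lt hq
  gcongr ‖η k‖ * exp ?_
  nlinarith [abs_nonneg (k : ℝ)]

lemma setIntegral_blSeriesComplex_mul_fourierMode {t : ℝ}
    (hη : Summable fun k : ℤ ↦ ‖η k‖ * exp (-|(k : ℝ)| * t)) {ε : ℝ} (hε : 0 < ε) (N : ℕ)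
    (k₀ : ℤ) :
    ∫ x in Ioo 0 (2 * π * ε * N), blSeriesComplex η (x / ε) t * fourierMode (-k₀) (x / ε) 0 =
      (2 * π * ε * N : ℝ) * η k₀ * exp (-|(k₀ : ℝ)| * t) := by
  set L := 2 * π * ε * N
  have hL : 0 ≤ L := by positivity
  set F : ℤ → ℝ → ℂ := fun k x ↦ η k * fourierMode k (x / ε) t * fourierMode (-k₀) (x / ε) 0
  have hF : ∀ k x, F k x = η k * exp (-|(k : ℝ)| * t) * fourierMode (k - k₀) (x / ε) 0 := by
    intro k x
    simp only [F, mul_assoc, fourierMode_mul_fourierMode_zero, sub_eq_add_neg]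
  have hF_int : ∀ k, IntegrableOn (F k) (Ioo 0 L) := fun k ↦
    (Continuous.integrableOn_Icc (by fun_prop)).mono_set Ioo_subset_Icc_self
  have hF_norm : ∀ k, ∫ x in Ioo 0 L, ‖F k x‖ = L * (‖η k‖ * exp (-|(k : ℝ)| * t)) := by
    intro k
    simp [F, norm_fourierMode, hL]
  have hF_integral : ∀ k, ∫ x in Ioo 0 L, F k x =
      if k = k₀ then (L : ℂ) * η k₀ * exp (-|(k₀ : ℝ)| * t) else 0 := by
    intro k
    simp_rw [hF]
    rw [integral_const_mul]
    split_ifs with hk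
    · subst hk
      simp [fourierMode, hL]
      ring
    · rw [setIntegral_fourierMode_eq_zero (sub_ne_zero.mpr hk) hε, mul_zero]
  calc ∫ x in Ioo 0 L, blSeriesComplex η (x / ε) t * fourierMode (-k₀) (x / ε) 0
      = ∫ x in Ioo 0 L, ∑' k, F k x := by simp_rw [F, blSeriesComplex, tsum_mul_right]
    _ = ∑' k, ∫ x in Ioo 0 L, F k x :=
        (integral_tsum_of_summable_integral_norm hF_int
          ((hη.mul_left L).congr fun k ↦ (hF_norm k).symm)).symm
    _ = _ := by simp_rw [hF_integral]; exact tsum_ite_eq k₀ _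

lemma mul_sq_le_setIntegral_sq_blSeries_sub (hconj : ∀ k, η (-k) = conj (η k)) {t : ℝ}
    (hη : Summable fun k : ℤ ↦ ‖η k‖ * exp (-|(k : ℝ)| * t)) {k₀ : ℤ} (hk₀ : k₀ ≠ 0) {ε : ℝ}
    (hε : 0 < ε) (N : ℕ) :
    2 * π * ε * N * (‖η k₀‖ * exp (-|(k₀ : ℝ)| * t)) ^ 2 ≤
      ∫ x in Ioo 0 (2 * π * ε * N), (blSeries η (x / ε) t - (η 0).re) ^ 2 := by
  set L := 2 * π * ε * N
  have hL : 0 ≤ L := by positivity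
  set f : ℝ → ℝ := fun x ↦ blSeries η (x / ε) t - (η 0).re
  have hf : Continuous f :=
    (Complex.continuous_re.comp (continuous_blSeriesComplex_div hη ε)).sub continuous_const
  have hη₀ : ((η 0).re : ℂ) = η 0 := Complex.conj_eq_iff_re.mp (by simpa using (hconj 0).symm)
  have hcoef : ∫ x in Ioo 0 L, (f x : ℂ) * fourierMode (-k₀) (x / ε) 0 =
      L * η k₀ * exp (-|(k₀ : ℝ)| * t) := by
    simp_rw [f, Complex.ofReal_sub, ofReal_blSeries hconj, hη₀, sub_mul]
    rw [integral_sub, setIntegral_blSeriesComplex_mul_fourierMode hη hε, integral_const_mul,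
      setIntegral_fourierMode_eq_zero (neg_ne_zero.mpr hk₀) hε, mul_zero, sub_zero]
    · exact (Continuous.integrableOn_Icc
        ((continuous_blSeriesComplex_div hη ε).mul (by fun_prop))).mono_set Ioo_subset_Icc_self
    · exact (Continuous.integrableOn_Icc (by fun_prop)).mono_set Ioo_subset_Icc_self
  have habs : L * (‖η k₀‖ * exp (-|(k₀ : ℝ)| * t)) ≤ ∫ x in Ioo 0 L, |f x| :=
    calc L * (‖η k₀‖ * exp (-|(k₀ : ℝ)| * t))
        = ‖∫ x in Ioo 0 L, (f x : ℂ) * fourierMode (-k₀) (x / ε) 0‖ := by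
          rw [hcoef, norm_mul, norm_mul, Complex.norm_real, Complex.norm_real,
            Real.norm_of_nonneg hL, Real.norm_of_nonneg (exp_pos _).le]
          ring
      _ ≤ ∫ x in Ioo 0 L, ‖(f x : ℂ) * fourierMode (-k₀) (x / ε) 0‖ :=
          norm_integral_le_integral_norm _
      _ = ∫ x in Ioo 0 L, |f x| := by simp [norm_fourierMode]
  have hint : ∀ g : ℝ → ℝ, Continuous g → IntegrableOn g (Ioo 0 L) := fun g hg ↦
    hg.integrableOn_Icc.mono_set Ioo_subset_Icc_self
  simpa [hL] using mul_sq_le_integral_sq (hint f hf) (hint _ (hf.pow 2)) (by positivity)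
    (by simpa [hL] using habs)

lemma summable_norm_mul_exp_and_sq_tsum_le
    (hsum : Summable fun k : ℤ ↦ (1 + |(k : ℝ)|) * ‖η k‖ ^ 2) {t : ℝ} (ht : 0 < t) :
    (Summable fun k : ℤ ↦ ‖η k‖ * exp (-|(k : ℝ)| * t)) ∧
      (∑' k : ℤ, ‖η k‖ * exp (-|(k : ℝ)| * t)) ^ 2 ≤
        (∑' k : ℤ, (1 + |(k : ℝ)|) * ‖η k‖ ^ 2) *
          ∑' k : ℤ, exp (-|(k : ℝ)| * (2 * t)) / (1 + |(k : ℝ)|) := by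
  set w : ℤ → ℝ := fun k ↦ √(1 + |(k : ℝ)|)
  have hw : ∀ k, 0 < w k := fun k ↦ by positivity
  have hw2 : ∀ k, w k ^ 2 = 1 + |(k : ℝ)| := fun k ↦ sq_sqrt (by positivity)
  have hfg : ∀ k : ℤ, w k * ‖η k‖ * (exp (-|(k : ℝ)| * t) / w k) = ‖η k‖ * exp (-|(k : ℝ)| * t) :=
    fun k ↦ by field_simp [(hw k).ne']
  have hf2 : ∀ k, (w k * ‖η k‖) ^ 2 = (1 + |(k : ℝ)|) * ‖η k‖ ^ 2 := fun k ↦ by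
    rw [mul_pow, hw2]
  have hg2 : ∀ k : ℤ, (exp (-|(k : ℝ)| * t) / w k) ^ 2 =
      exp (-|(k : ℝ)| * (2 * t)) / (1 + |(k : ℝ)|) := fun k ↦ by
    rw [div_pow, hw2, ← exp_nat_mul]; ring_nf
  have hg2_sum : Summable fun k : ℤ ↦ exp (-|(k : ℝ)| * (2 * t)) / (1 + |(k : ℝ)|) :=
    (summable_exp_neg_abs_mul (by positivity)).of_nonneg_of_le (fun k ↦ by positivity)
      fun k ↦ div_le_self (exp_pos _).le (by simp)
  obtain ⟨hs, hle⟩ := summable_mul_and_sq_tsum_mul_le (fun k ↦ mul_nonneg (hw k).le (norm_nonneg _))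
    (fun k ↦ by positivity) (hsum.congr fun k ↦ (hf2 k).symm) (hg2_sum.congr fun k ↦ (hg2 k).symm)
  simp only [hfg, hf2, hg2] at hs hle
  exact ⟨hs, hle⟩

lemma exists_sq_blSeries_sub_le (hsum : Summable fun k : ℤ ↦ (1 + |(k : ℝ)|) * ‖η k‖ ^ 2) :
    ∃ C, ∀ t > 0, ∀ y₁, (blSeries η y₁ t - (η 0).re) ^ 2 ≤ C * (1 + t ^ (-(1 / 2) : ℝ)) := by
  set A := ∑' k : ℤ, (1 + |(k : ℝ)|) * ‖η k‖ ^ 2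
  set W := ∑' k : ℤ, (1 + |(k : ℝ)|) ^ (-(3 / 2) : ℝ)
  have hA : 0 ≤ A := tsum_nonneg fun k ↦ by positivity
  refine ⟨4 * A * W, fun t ht y₁ ↦ ?_⟩
  obtain ⟨hs, hle⟩ := summable_norm_mul_exp_and_sq_tsum_le hsum ht
  set S := ∑' k : ℤ, ‖η k‖ * exp (-|(k : ℝ)| * t)
  have hη₀ : ‖η 0‖ ≤ S :=
    calc ‖η 0‖ = ‖η 0‖ * exp (-|((0 : ℤ) : ℝ)| * t) := by simp
      _ ≤ S := hs.le_tsum 0 fun k _ ↦ by positivity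
  have hdev : |blSeries η y₁ t - (η 0).re| ≤ 2 * S :=
    calc |blSeries η y₁ t - (η 0).re| ≤ |blSeries η y₁ t| + |(η 0).re| := abs_sub _ _
      _ ≤ ‖blSeriesComplex η y₁ t‖ + ‖η 0‖ :=
          add_le_add (Complex.abs_re_le_norm _) (Complex.abs_re_le_norm _)
      _ ≤ 2 * S := by linarith [norm_blSeriesComplex_le hs y₁]
  have hkernel : ∑' k : ℤ, exp (-|(k : ℝ)| * (2 * t)) / (1 + |(k : ℝ)|) ≤
      (1 + t ^ (-(1 / 2) : ℝ)) * W := by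
    rw [← tsum_mul_left]
    exact Summable.tsum_le_tsum (fun k ↦ exp_neg_abs_mul_div_one_add_abs_le k ht)
      ((summable_exp_neg_abs_mul (by positivity)).of_nonneg_of_le (fun k ↦ by positivity)
        fun k ↦ div_le_self (exp_pos _).le (by simp))
      ((summable_one_add_abs_rpow_neg (by norm_num)).mul_left _)
  calc (blSeries η y₁ t - (η 0).re) ^ 2 = |blSeries η y₁ t - (η 0).re| ^ 2 := (sq_abs _).symm
    _ ≤ (2 * S) ^ 2 := pow_le_pow_left₀ (abs_nonneg _) hdev 2
    _ ≤ 4 * (A * ((1 + t ^ (-(1 / 2) : ℝ)) * W)) := by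
        nlinarith [mul_le_mul_of_nonneg_left hkernel hA]
    _ = 4 * A * W * (1 + t ^ (-(1 / 2) : ℝ)) := by ring

lemma integrableOn_Omega0_sq_blSeries_sub
    (hsum : Summable fun k : ℤ ↦ (1 + |(k : ℝ)|) * ‖η k‖ ^ 2) {ε : ℝ} (hε : 0 < ε) (L : ℝ) :
    IntegrableOn (fun p : ℝ × ℝ ↦ (blSeries η (p.1 / ε) (p.2 / ε) - (η 0).re) ^ 2)
      (Omega0 L) := by
  obtain ⟨C, hC⟩ := exists_sq_blSeries_sub_le hsum
  have hΩ : MeasurableSet (Omega0 L) := measurableSet_Ioo.prod measurableSet_Ioo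
  have hcont : ContinuousOn (fun p : ℝ × ℝ ↦ blSeriesComplex η (p.1 / ε) (p.2 / ε)) (Omega0 L) :=
    (continuousOn_blSeriesComplex fun t ht ↦ (summable_norm_mul_exp_and_sq_tsum_le hsum ht).1).comp
      (f := fun p : ℝ × ℝ ↦ (p.1 / ε, p.2 / ε)) (by fun_prop) fun p hp ↦ div_pos hp.2.1 hε
  have hmeas : AEStronglyMeasurable
      (fun p : ℝ × ℝ ↦ (blSeries η (p.1 / ε) (p.2 / ε) - (η 0).re) ^ 2)
      (volume.restrict (Omega0 L)) := (((Complex.continuous_re.comp_continuousOn hcont).sub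
    continuousOn_const).pow 2).aestronglyMeasurable hΩ
  have hdom_slice : IntegrableOn (fun y ↦ C * (1 + (y / ε) ^ (-(1 / 2) : ℝ))) (Ioo 0 1) := by
    have hrpow := (intervalIntegral.integrableOn_Ioo_rpow_iff one_pos).mpr
      (show (-1 : ℝ) < -(1 / 2) by norm_num)
    refine IntegrableOn.congr_fun (f := fun y ↦ C * (1 + y ^ (-(1 / 2) : ℝ) / ε ^ (-(1 / 2) : ℝ)))
      ?_ (fun y hy ↦ by rw [div_rpow hy.1.le hε.le]) measurableSet_Ioo
    exact ((integrableOn_const measure_Ioo_lt_top.ne).add (hrpow.div_const _)).const_mul C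
  have hdom : IntegrableOn (fun p : ℝ × ℝ ↦ C * (1 + (p.2 / ε) ^ (-(1 / 2) : ℝ))) (Omega0 L) := by
    rw [IntegrableOn, Omega0, Measure.volume_eq_prod, ← Measure.prod_restrict]
    exact hdom_slice.comp_snd _
  refine hdom.mono' hmeas ((ae_restrict_iff' hΩ).mpr (ae_of_all _ fun p hp ↦ ?_))
  rw [Real.norm_of_nonneg (sq_nonneg _)]
  exact hC _ (div_pos hp.2.1 hε) _

end Series

lemma mul_le_setIntegral_Omega0 {L : ℝ} {f : ℝ × ℝ → ℝ} (hf : IntegrableOn f (Omega0 L))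
    (hf₀ : ∀ p, 0 ≤ f p) {ε m : ℝ} (hε₀ : 0 ≤ ε) (hε₁ : ε ≤ 1)
    (hslice : ∀ y ∈ Ioo 0 ε, m ≤ ∫ x in Ioo 0 L, f (x, y)) :
    ε * m ≤ ∫ p in Omega0 L, f p := by
  rw [IntegrableOn, Omega0, Measure.volume_eq_prod, ← Measure.prod_restrict] at hf
  rw [Omega0, Measure.volume_eq_prod, ← Measure.prod_restrict, integral_prod_symm f hf]
  calc ε * m = m * volume.real (Ioo 0 ε) := by simp [hε₀, mul_comm]
    _ ≤ ∫ y in Ioo 0 ε, ∫ x in Ioo 0 L, f (x, y) :=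
        setIntegral_ge_of_const_le_real measurableSet_Ioo measure_Ioo_lt_top.ne hslice
          (IntegrableOn.mono_set hf.integral_prod_right (Ioo_subset_Ioo_right hε₁))
    _ ≤ ∫ y in Ioo 0 1, ∫ x in Ioo 0 L, f (x, y) :=
        setIntegral_mono_set hf.integral_prod_right
          (ae_of_all _ fun y ↦ integral_nonneg fun x ↦ hf₀ (x, y))
          (Ioo_subset_Ioo_right hε₁).eventuallyLE

/-- Optimality of the `√ε` rate for the oscillating boundary layer: if some nonzero
Fourier mode `η_{k₀} ≠ 0` (`k₀ ≠ 0`) is present, then `‖β(·/ε) − η₀‖_{L²(Ω⁰)} ≥ c √ε`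
for all small admissible `ε`. -/
theorem boundary_layer_oscillation_lower_bound
    (L : ℝ) (hL : 0 < L) (η : ℤ → ℂ)
    (hconj : ∀ k : ℤ, η (-k) = starRingEnd ℂ (η k))
    (hsum : Summable (fun k : ℤ => (1 + |(k : ℝ)|) * ‖η k‖ ^ 2))
    (k₀ : ℤ) (hk₀ : k₀ ≠ 0) (hη : η k₀ ≠ 0) :
    ∃ c > (0 : ℝ), ∃ ε₀ : ℝ, 0 < ε₀ ∧ ε₀ ≤ 1 ∧
      ∀ ε : ℝ, 0 < ε → ε ≤ ε₀ → (∃ N : ℕ, 0 < N ∧ L = 2 * π * ε * N) →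
        c * Real.sqrt ε ≤
          Real.sqrt (∫ p in Omega0 L,
            (blSeries η (p.1 / ε) (p.2 / ε) - (η 0).re) ^ 2) := by
  set m := ‖η k₀‖ * exp (-|(k₀ : ℝ)|)
  refine ⟨√L * m, by positivity, 1, one_pos, le_rfl, ?_⟩
  rintro ε hε hε₁ ⟨N, -, hLN⟩
  have hslice : ∀ y ∈ Ioo 0 ε, L * m ^ 2 ≤
      ∫ x in Ioo 0 L, (blSeries η (x / ε) (y / ε) - (η 0).re) ^ 2 := by
    intro y hy
    have hy₁ : y / ε ≤ 1 := (div_le_one hε).mpr hy.2.le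
    rw [hLN]
    refine le_trans ?_ (mul_sq_le_setIntegral_sq_blSeries_sub hconj
      (summable_norm_mul_exp_and_sq_tsum_le hsum (div_pos hy.1 hε)).1 hk₀ hε N)
    gcongr
    refine mul_le_mul_of_nonneg_left (exp_le_exp.mpr ?_) (norm_nonneg _)
    nlinarith [abs_nonneg (k₀ : ℝ)]
  refine le_sqrt_of_sq_le ?_
  rw [mul_pow, mul_pow, sq_sqrt hL.le, sq_sqrt hε.le, mul_comm]
  exact mul_le_setIntegral_Omega0 (integrableOn_Omega0_sq_blSeries_sub hsum hε L)
    (fun p ↦ sq_nonneg _) hε.le hε₁ hslice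

end
end
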